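/- Let R be a semiring, M an R-module, N a saturated submodule of M, π : M → M/N the natural projection, and K a saturated submodule of M/N. Then M/π⁻¹(K) is isomorphic to (M/N)/K as R-modules. -/

import Mathlib

/-!
The projection `π : M → M/N` induces `M/π⁻¹(K) → (M/N)/K`, `[x] ↦ [π x]`, which is onto
because `π` is. For injectivity, lift the elements of `K` witnessing `π x ~ π y` through `π`
to `u, v ∈ π⁻¹(K)`; then `π (x + u) = π (y + v)`, and since `N ⊆ π⁻¹(K)` this already makes
`x + u` and `y + v` congruent modulo `π⁻¹(K)`.
-/

/-- A submodule `N` of a module `M` over a semiring is *saturated* if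
`x + y ∈ N` and `y ∈ N` imply `x ∈ N`. -/
def SaturatedSub {R M : Type*} [Semiring R] [AddCommMonoid M] [Module R M]
    (N : Submodule R M) : Prop :=
  ∀ x y : M, x + y ∈ N → y ∈ N → x ∈ N

variable {R M : Type*} [Semiring R] [AddCommMonoid M] [Module R M]

/-- The congruence on `M` defined by a submodule `N`:
`x ~ y` iff `x + n = y + n'` for some `n, n' ∈ N`. -/
def quotCon (N : Submodule R M) : AddCon M where
  r x y := ∃ n ∈ N, ∃ n' ∈ N, x + n = y + n'
  iseqv := by
    constructor
    · intro x; exact ⟨0, N.zero_mem, 0, N.zero_mem, rfl⟩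
    · rintro x y ⟨n, hn, n', hn', h⟩; exact ⟨n', hn', n, hn, h.symm⟩
    · rintro x y z ⟨n, hn, n', hn', h1⟩ ⟨m, hm, m', hm', h2⟩
      refine ⟨n + m, N.add_mem hn hm, m' + n', N.add_mem hm' hn', ?_⟩
      calc x + (n + m) = x + n + m := (add_assoc _ _ _).symm
        _ = y + n' + m := by rw [h1]
        _ = y + m + n' := by rw [add_right_comm]
        _ = z + m' + n' := by rw [h2]
        _ = z + (m' + n') := add_assoc _ _ _
  add' := by
    rintro w x y z ⟨n, hn, n', hn', h1⟩ ⟨m, hm, m', hm', h2⟩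
    refine ⟨n + m, N.add_mem hn hm, n' + m', N.add_mem hn' hm', ?_⟩
    calc w + y + (n + m) = (w + n) + (y + m) := by rw [add_add_add_comm]
      _ = (x + n') + (z + m') := by rw [h1, h2]
      _ = x + z + (n' + m') := by rw [add_add_add_comm]

instance (N : Submodule R M) : SMul R (quotCon N).Quotient where
  smul r := Quotient.map' (fun m => r • m) (by
    rintro a b ⟨n, hn, n', hn', h⟩
    exact ⟨r • n, N.smul_mem r hn, r • n', N.smul_mem r hn', by
      rw [← smul_add, h, smul_add]⟩)

instance (N : Submodule R M) : Module R (quotCon N).Quotient where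
  one_smul x := Quotient.inductionOn' x fun m => congrArg Quotient.mk'' (one_smul R m)
  mul_smul r s x := Quotient.inductionOn' x fun m => congrArg Quotient.mk'' (mul_smul r s m)
  smul_zero r := congrArg Quotient.mk'' (smul_zero (a := r) : r • (0 : M) = 0)
  smul_add r x y := Quotient.inductionOn₂' x y fun m n => congrArg Quotient.mk'' (smul_add r m n)
  add_smul r s x := Quotient.inductionOn' x fun m => congrArg Quotient.mk'' (add_smul r s m)
  zero_smul x := Quotient.inductionOn' x fun m => congrArg Quotient.mk'' (zero_smul R m)

/-- The canonical projection `M → M/N` as a linear map. -/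
def mkLinear (N : Submodule R M) : M →ₗ[R] (quotCon N).Quotient where
  toFun := Quotient.mk''
  map_add' _ _ := rfl
  map_smul' _ _ := by exact rfl

theorem quotCon_mono {N N' : Submodule R M} (h : N ≤ N') : quotCon N ≤ quotCon N' := by
  rintro x y ⟨n, hn, n', hn', hxy⟩
  exact ⟨n, h hn, n', h hn', hxy⟩

theorem mkLinear_surjective (N : Submodule R M) : Function.Surjective (mkLinear N) :=
  AddCon.mk'_surjective

theorem mkLinear_eq_zero_of_mem {N : Submodule R M} {n : M} (hn : n ∈ N) : mkLinear N n = 0 :=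
  (AddCon.eq _).mpr ⟨0, N.zero_mem, n, hn, by simp⟩

theorem le_comap_mkLinear (N : Submodule R M) (K : Submodule R (quotCon N).Quotient) :
    N ≤ K.comap (mkLinear N) := fun n hn => by
  simp [mkLinear_eq_zero_of_mem hn]

section quotConMap

variable {M' : Type*} [AddCommMonoid M'] [Module R M'] (f : M →ₗ[R] M') (K : Submodule R M')

theorem quotCon_apply_of_comap {x y : M} (h : quotCon (K.comap f) x y) : quotCon K (f x) (f y) := by
  obtain ⟨n, hn, n', hn', hxy⟩ := h
  exact ⟨f n, hn, f n', hn', by rw [← map_add, hxy, map_add]⟩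

def quotConMap : (quotCon (K.comap f)).Quotient →ₗ[R] (quotCon K).Quotient where
  toFun := Quotient.map' f fun _ _ => quotCon_apply_of_comap f K
  map_add' a b := AddCon.induction_on₂ a b fun x y => congrArg Quotient.mk'' (map_add f x y)
  map_smul' r a := AddCon.induction_on a fun x => congrArg Quotient.mk'' (map_smul f r x)

variable {f}

theorem quotConMap_surjective (hf : Function.Surjective f) : Function.Surjective (quotConMap f K) :=
  fun q => AddCon.induction_on q fun y => by
    obtain ⟨x, rfl⟩ := hf y
    exact ⟨x, rfl⟩

theorem quotConMap_injective (hf : Function.Surjective f)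
    (hf_eq : ∀ x y, f x = f y → quotCon (K.comap f) x y) :
    Function.Injective (quotConMap f K) := by
  intro a b
  refine AddCon.induction_on₂ a b fun x y hxy => ?_
  obtain ⟨k, hk, k', hk', hfxy⟩ := (AddCon.eq _).mp hxy
  obtain ⟨u, rfl⟩ := hf k
  obtain ⟨v, rfl⟩ := hf k'
  obtain ⟨n, hn, n', hn', hxuyv⟩ := hf_eq (x + u) (y + v) (by rw [map_add, map_add, hfxy])
  refine (AddCon.eq _).mpr ⟨u + n, add_mem hk hn, v + n', add_mem hk' hn', ?_⟩
  rwa [← add_assoc, ← add_assoc]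

end quotConMap

theorem quotCon_comap_mkLinear_of_eq {N : Submodule R M} (K : Submodule R (quotCon N).Quotient)
    {x y : M} (h : mkLinear N x = mkLinear N y) : quotCon (K.comap (mkLinear N)) x y :=
  quotCon_mono (le_comap_mkLinear N K) ((AddCon.eq _).mp h)

theorem stmt4 {R M : Type*} [Semiring R] [AddCommMonoid M] [Module R M]
    (N : Submodule R M)
    (K : Submodule R (quotCon N).Quotient) :
    Nonempty ((quotCon (K.comap (mkLinear N))).Quotient ≃ₗ[R] (quotCon K).Quotient) :=
  ⟨LinearEquiv.ofBijective (quotConMap (mkLinear N) K)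
    ⟨quotConMap_injective K (mkLinear_surjective N) fun _ _ => quotCon_comap_mkLinear_of_eq K,
      quotConMap_surjective K (mkLinear_surjective N)⟩⟩
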